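/- Let M_A, M_B ∈ ℝ^{2×2} be symmetric positive definite matrices and c_A, c_B ∈ ℝ². Let 𝒜 = {p ∈ ℝ² : (p − c_A)ᵀ·M_A·(p − c_A) ≤ 1} and ℬ = {p ∈ ℝ² : (p − c_B)ᵀ·M_B·(p − c_B) ≤ 1} be the corresponding solid ellipses, and let A, B ∈ ℝ^{3×3} be their homogeneous matrices. Then 𝒜 ∩ ℬ = ∅ if and only if there exist two distinct negative real numbers λ1* ≠ λ2* with λ1* < 0, λ2* < 0 such that f(λ1*) = f(λ2*) = 0, where f(λ) = det(λ·A − B); i.e., the ellipses are disjoint if and only if the characteristic equation has two distinct negative real roots. -/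

import Mathlib

/-- The homogeneous matrix of the solid planar ellipse
`{p ∈ ℝ² : (p − c)ᵀ·M·(p − c) ≤ 1}`: in block form `[[M, −M·c], [−cᵀ·M, cᵀ·M·c − 1]]`. -/
def ellipseHomMat (M : Matrix (Fin 2) (Fin 2) ℝ) (c : Fin 2 → ℝ) :
    Matrix (Fin 3) (Fin 3) ℝ :=
  ![![M 0 0, M 0 1, -(M.mulVec c) 0],
    ![M 1 0, M 1 1, -(M.mulVec c) 1],
    ![-(Matrix.vecMul c M) 0, -(Matrix.vecMul c M) 1,
      dotProduct c (M.mulVec c) - 1]]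

/-- The solid planar ellipse `{p ∈ ℝ² : (p − c)ᵀ·M·(p − c) ≤ 1}`. -/
def solidEllipse (M : Matrix (Fin 2) (Fin 2) ℝ) (c : Fin 2 → ℝ) :
    Set (Fin 2 → ℝ) :=
  {p | dotProduct (p - c) (M.mulVec (p - c)) ≤ 1}

/-! For `μ ≥ 0` the pencil `μ • A + B` is the homogeneous matrix of the convex quadratic
`F_μ = μ • qA + qB`, where `q = (p - c)ᵀ M (p - c) - 1` is the defining function of an ellipse, and a
Schur complement gives `det (μ • A + B) = det (μ • MA + MB) * min F_μ`. So `det (μ • A + B) > 0`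
exactly when `F_μ > 0` everywhere, and then no point lies in both ellipses. Conversely, if the
ellipses are disjoint, follow the minimiser `z s` of `s • qA + (1 - s) • qB` for `s ∈ [0, 1]`: it
lies in `ℬ` (hence outside `𝒜`) at `s = 0` and in `𝒜` at `s = 1`, so by the intermediate value
theorem `qA (z s) = qB (z s)` for some `s`; this common value is the minimum, and it is positive
because `z s` cannot lie in both ellipses.

Finally `μ ↦ det (μ • A + B)` is a cubic with leading coefficient `det A = -det MA < 0` and
constant term `det B = -det MB < 0`; such a cubic is positive somewhere on `(0, ∞)` iff it has two
distinct positive roots. The substitution `λ = -μ` turns these into the negative roots of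
`det (λ • A - B) = -det (-λ • A + B)`. -/

open Matrix

theorem Matrix.PosDef.isSymm {n : Type*} {M : Matrix n n ℝ} (hM : M.PosDef) : M.IsSymm :=
  isHermitian_iff_isSymm.mp hM.isHermitian

namespace Matrix.IsSymm

variable {n : Type*} [Fintype n] {M : Matrix n n ℝ}

theorem dotProduct_mulVec_comm (hM : M.IsSymm) (x y : n → ℝ) :
    x ⬝ᵥ M *ᵥ y = y ⬝ᵥ M *ᵥ x := by
  rw [dotProduct_mulVec, ← mulVec_transpose, hM.eq, dotProduct_comm]

theorem dotProduct_mulVec_sub_eq_add (hM : M.IsSymm) (p z c : n → ℝ) :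
    (p - c) ⬝ᵥ M *ᵥ (p - c) =
      (z - c) ⬝ᵥ M *ᵥ (z - c) + 2 * ((p - z) ⬝ᵥ M *ᵥ (z - c)) + (p - z) ⬝ᵥ M *ᵥ (p - z) := by
  rw [show p - c = (p - z) + (z - c) by abel, mulVec_add, dotProduct_add, add_dotProduct,
    add_dotProduct, hM.dotProduct_mulVec_comm (z - c) (p - z)]
  ring

end Matrix.IsSymm

def ellipseForm {n : Type*} [Fintype n] (M : Matrix n n ℝ) (c p : n → ℝ) : ℝ :=
  (p - c) ⬝ᵥ M *ᵥ (p - c) - 1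

theorem ellipseForm_self {n : Type*} [Fintype n] (M : Matrix n n ℝ) (c : n → ℝ) :
    ellipseForm M c c = -1 := by
  simp [ellipseForm]

theorem posDef_pencil {n : Type*} {MA MB : Matrix n n ℝ} (hA : MA.PosDef) (hB : MB.PosDef)
    {a b : ℝ} (ha : 0 ≤ a) (hb : 0 ≤ b) (hab : 0 < a + b) : (a • MA + b • MB).PosDef := by
  rcases ha.eq_or_lt with rfl | ha
  · simpa using hB.smul (by simpa using hab)
  · exact (hA.smul ha).add_posSemidef (hB.posSemidef.smul hb)

section Pencil

variable {n : Type*} [Fintype n] {MA MB : Matrix n n ℝ} {cA cB : n → ℝ} {a b : ℝ}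

theorem pencil_ellipseForm_eq_add (hA : MA.IsSymm) (hB : MB.IsSymm) {z : n → ℝ}
    (hz : a • MA *ᵥ (z - cA) + b • MB *ᵥ (z - cB) = 0) (p : n → ℝ) :
    a * ellipseForm MA cA p + b * ellipseForm MB cB p =
      a * ellipseForm MA cA z + b * ellipseForm MB cB z +
        (p - z) ⬝ᵥ (a • MA + b • MB) *ᵥ (p - z) := by
  have hcross := congrArg ((p - z) ⬝ᵥ ·) hz
  simp only [dotProduct_add, dotProduct_smul, dotProduct_zero, smul_eq_mul] at hcross
  simp only [ellipseForm, hA.dotProduct_mulVec_sub_eq_add p z cA,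
    hB.dotProduct_mulVec_sub_eq_add p z cB, add_mulVec, smul_mulVec, dotProduct_add,
    dotProduct_smul, smul_eq_mul]
  linear_combination 2 * hcross

variable [DecidableEq n]

noncomputable def pencilCenter (MA MB : Matrix n n ℝ) (cA cB : n → ℝ) (a b : ℝ) : n → ℝ :=
  (a • MA + b • MB)⁻¹ *ᵥ (a • MA *ᵥ cA + b • MB *ᵥ cB)

theorem pencilCenter_stationary (hK : IsUnit (a • MA + b • MB).det) :
    a • MA *ᵥ (pencilCenter MA MB cA cB a b - cA) +
      b • MB *ᵥ (pencilCenter MA MB cA cB a b - cB) = 0 := by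
  have hcenter : (a • MA + b • MB) *ᵥ pencilCenter MA MB cA cB a b =
      a • MA *ᵥ cA + b • MB *ᵥ cB := by
    rw [pencilCenter, mulVec_mulVec, mul_nonsing_inv _ hK, one_mulVec]
  rw [add_mulVec, smul_mulVec, smul_mulVec] at hcenter
  simp only [mulVec_sub, smul_sub]
  rw [sub_add_sub_comm, hcenter, sub_self]

theorem pencil_ellipseForm_pencilCenter_le (hA : MA.IsSymm) (hB : MB.IsSymm)
    (hK : (a • MA + b • MB).PosDef) (p : n → ℝ) :
    a * ellipseForm MA cA (pencilCenter MA MB cA cB a b) +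
        b * ellipseForm MB cB (pencilCenter MA MB cA cB a b) ≤
      a * ellipseForm MA cA p + b * ellipseForm MB cB p := by
  rw [pencil_ellipseForm_eq_add hA hB (pencilCenter_stationary hK.det_pos.ne'.isUnit) p]
  simpa using hK.posSemidef.dotProduct_mulVec_nonneg (p - pencilCenter MA MB cA cB a b)

theorem continuousOn_pencilCenter {S : Set ℝ}
    (hS : ∀ s ∈ S, (s • MA + (1 - s) • MB).det ≠ 0) :
    ContinuousOn (fun s => pencilCenter MA MB cA cB s (1 - s)) S := by
  intro s hs
  have hinv : ContinuousAt (fun s : ℝ => (s • MA + (1 - s) • MB)⁻¹) s := by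
    refine ContinuousAt.comp (g := Inv.inv) (continuousAt_matrix_inv _ ?_) (by fun_prop)
    rw [Ring.inverse_eq_inv']
    exact continuousAt_inv₀ (hS s hs)
  exact ContinuousAt.continuousWithinAt (by unfold pencilCenter; fun_prop)

theorem exists_ellipseForm_pencilCenter_eq (hA : MA.PosDef) (hB : MB.PosDef)
    (hAB : ∀ p, ellipseForm MA cA p ≤ 0 → 0 < ellipseForm MB cB p) :
    ∃ s ∈ Set.Icc (0 : ℝ) 1, ellipseForm MA cA (pencilCenter MA MB cA cB s (1 - s)) =
      ellipseForm MB cB (pencilCenter MA MB cA cB s (1 - s)) := by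
  have hK : ∀ s ∈ Set.Icc (0 : ℝ) 1, (s • MA + (1 - s) • MB).PosDef := fun s hs =>
    posDef_pencil hA hB hs.1 (by linarith [hs.2]) (by norm_num)
  have hB0 := pencil_ellipseForm_pencilCenter_le (cA := cA) (cB := cB) hA.isSymm hB.isSymm
    (hK 0 (by norm_num)) cB
  have hA1 := pencil_ellipseForm_pencilCenter_le (cA := cA) (cB := cB) hA.isSymm hB.isSymm
    (hK 1 (by norm_num)) cA
  simp only [zero_mul, sub_zero, one_mul, zero_add, sub_self, add_zero, ellipseForm_self]
    at hB0 hA1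
  have hA0 := mt (hAB (pencilCenter MA MB cA cB 0 1)) (by linarith)
  have hB1 := hAB (pencilCenter MA MB cA cB 1 0) (by linarith)
  have hcenter : ContinuousOn (fun s => pencilCenter MA MB cA cB s (1 - s)) (Set.Icc 0 1) :=
    continuousOn_pencilCenter fun s hs => (hK s hs).det_pos.ne'
  have hφ : ContinuousOn (fun s => ellipseForm MA cA (pencilCenter MA MB cA cB s (1 - s)) -
      ellipseForm MB cB (pencilCenter MA MB cA cB s (1 - s))) (Set.Icc 0 1) := by
    simp only [ellipseForm]
    fun_prop
  obtain ⟨s, hs, hφs⟩ := intermediate_value_Icc' zero_le_one hφ (show (0 : ℝ) ∈ Set.Icc _ _ from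
    ⟨by simp only [sub_self]; linarith, by simp only [sub_zero]; linarith⟩)
  exact ⟨s, hs, sub_eq_zero.mp hφs⟩

theorem disjoint_iff_exists_pencil_pos (hA : MA.PosDef) (hB : MB.PosDef) :
    Disjoint {p | ellipseForm MA cA p ≤ 0} {p | ellipseForm MB cB p ≤ 0} ↔
      ∃ μ > 0, ∀ p, 0 < μ * ellipseForm MA cA p + ellipseForm MB cB p := by
  refine ⟨fun hAB => ?_, fun ⟨μ, hμ, hpos⟩ => Set.disjoint_left.mpr fun p hpA hpB => ?_⟩
  · have hAB' : ∀ p, ellipseForm MA cA p ≤ 0 → 0 < ellipseForm MB cB p := fun _ hp =>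
      not_le.mp (Set.disjoint_left.mp hAB hp)
    obtain ⟨s, hs, heq⟩ := exists_ellipseForm_pencilCenter_eq hA hB hAB'
    set z := pencilCenter MA MB cA cB s (1 - s)
    have hv : 0 < ellipseForm MA cA z := by
      by_contra! hv
      linarith [hAB' z hv]
    have hpos : ∀ p, 0 < s * ellipseForm MA cA p + (1 - s) * ellipseForm MB cB p := fun p =>
      calc 0 < ellipseForm MA cA z := hv
        _ = s * ellipseForm MA cA z + (1 - s) * ellipseForm MB cB z := by rw [← heq]; ring
        _ ≤ _ := pencil_ellipseForm_pencilCenter_le hA.isSymm hB.isSymm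
          (posDef_pencil hA hB hs.1 (by linarith [hs.2]) (by norm_num)) p
    -- at `s = 0` or `s = 1` the positive form would be `qB` or `qA`, which is `-1` at the centre
    have hs0 : 0 < s := hs.1.lt_of_ne' fun h => by
      have := hpos cB
      norm_num [h, ellipseForm_self] at this
    have hs1 : s < 1 := hs.2.lt_of_ne fun h => by
      have := hpos cA
      norm_num [h, ellipseForm_self] at this
    refine ⟨s / (1 - s), div_pos hs0 (by linarith), fun p => ?_⟩
    have hne : 1 - s ≠ 0 := by linarith
    calc (0 : ℝ) < (s * ellipseForm MA cA p + (1 - s) * ellipseForm MB cB p) / (1 - s) :=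
          div_pos (hpos p) (by linarith)
      _ = _ := by field_simp
  · nlinarith [hpos p, hpA.out, hpB.out]

end Pencil

theorem solidEllipse_eq_setOf_ellipseForm (M : Matrix (Fin 2) (Fin 2) ℝ) (c : Fin 2 → ℝ) :
    solidEllipse M c = {p | ellipseForm M c p ≤ 0} := by
  ext p
  simp [solidEllipse, ellipseForm]

def homogenize (p : Fin 2 → ℝ) : Fin 3 → ℝ := ![p 0, p 1, 1]

/-- Schur complement; the hypothesis says that `(y, 1)` is a stationary point of the quadratic
form of `H` on the affine plane `x₂ = 1`. -/
theorem det_eq_det_submatrix_mul_of_stationary {H : Matrix (Fin 3) (Fin 3) ℝ} (hH : H.IsSymm)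
    {y : Fin 2 → ℝ} (hy : ∀ i : Fin 2, (H *ᵥ homogenize y) i.castSucc = 0) :
    H.det = (H.submatrix Fin.castSucc Fin.castSucc).det *
      (homogenize y ⬝ᵥ H *ᵥ homogenize y) := by
  have h0 := hy 0
  have h1 := hy 1
  simp only [homogenize, mulVec, dotProduct, Fin.isValue, Fin.castSucc_zero, Fin.castSucc_one,
    Fin.sum_univ_three, cons_val_zero, cons_val_one, cons_val, mul_one] at h0 h1 ⊢
  rw [det_fin_three, det_fin_two]
  simp only [Fin.isValue, submatrix_apply, Fin.castSucc_zero, Fin.castSucc_one]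
  rw [hH.apply 0 1, hH.apply 0 2, hH.apply 1 2] at *
  -- `det H - det K * Q = -(det K • y + adjugate K *ᵥ w) ⬝ᵥ (K *ᵥ y + w)` for the upper left
  -- block `K`, `w = (H 0 2, H 1 2)` and `Q` the quadratic form at `(y, 1)`
  linear_combination
    (-((H 0 0 * H 1 1 - H 0 1 * H 0 1) * y 0 + H 1 1 * H 0 2 - H 0 1 * H 1 2)) * h0 +
    (-((H 0 0 * H 1 1 - H 0 1 * H 0 1) * y 1 - H 0 1 * H 0 2 + H 0 0 * H 1 2)) * h1

section EllipseHomMat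

variable (M : Matrix (Fin 2) (Fin 2) ℝ) (c : Fin 2 → ℝ)

theorem ellipseHomMat_isSymm {M : Matrix (Fin 2) (Fin 2) ℝ} (hM : M.IsSymm) :
    (ellipseHomMat M c).IsSymm := by
  refine IsSymm.ext fun i j => ?_
  fin_cases i <;> fin_cases j <;>
    simp only [ellipseHomMat, mulVec, vecMul, dotProduct, hM.apply, Fin.sum_univ_two, Fin.isValue,
      Fin.zero_eta, Fin.mk_one, Fin.reduceFinMk, cons_val', cons_val, cons_val_zero, cons_val_one,
      cons_val_fin_one] <;> ring

theorem ellipseHomMat_mulVec_homogenize_castSucc (p : Fin 2 → ℝ) (i : Fin 2) :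
    (ellipseHomMat M c *ᵥ homogenize p) i.castSucc = (M *ᵥ (p - c)) i := by
  fin_cases i <;>
    simp only [ellipseHomMat, homogenize, mulVec, dotProduct, Fin.sum_univ_two, Fin.sum_univ_three,
      Fin.isValue, Fin.zero_eta, Fin.mk_one, Fin.castSucc_zero, Fin.castSucc_one, cons_val',
      cons_val, cons_val_zero, cons_val_one, cons_val_fin_one, Pi.sub_apply] <;> ring

theorem homogenize_dotProduct_ellipseHomMat_mulVec (p : Fin 2 → ℝ) :
    homogenize p ⬝ᵥ ellipseHomMat M c *ᵥ homogenize p = ellipseForm M c p := by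
  simp only [ellipseHomMat, homogenize, ellipseForm, mulVec, vecMul, dotProduct, Fin.sum_univ_two,
    Fin.sum_univ_three, Fin.isValue, cons_val', cons_val, cons_val_zero, cons_val_one,
    cons_val_fin_one, Pi.sub_apply]
  ring

theorem det_ellipseHomMat : (ellipseHomMat M c).det = -M.det := by
  rw [det_fin_three, det_fin_two]
  simp only [ellipseHomMat, mulVec, vecMul, dotProduct, Fin.sum_univ_two, Fin.isValue, cons_val',
    cons_val, cons_val_zero, cons_val_one, cons_val_fin_one]
  ring

end EllipseHomMat

section PencilDet

variable {MA MB : Matrix (Fin 2) (Fin 2) ℝ} {cA cB : Fin 2 → ℝ} {a b : ℝ}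

theorem det_pencil_ellipseHomMat (hA : MA.IsSymm) (hB : MB.IsSymm)
    (hK : IsUnit (a • MA + b • MB).det) :
    (a • ellipseHomMat MA cA + b • ellipseHomMat MB cB).det =
      (a • MA + b • MB).det * (a * ellipseForm MA cA (pencilCenter MA MB cA cB a b) +
        b * ellipseForm MB cB (pencilCenter MA MB cA cB a b)) := by
  have hH := ((ellipseHomMat_isSymm cA hA).smul a).add ((ellipseHomMat_isSymm cB hB).smul b)
  have hK' : (a • ellipseHomMat MA cA + b • ellipseHomMat MB cB).submatrix Fin.castSucc
      Fin.castSucc = a • MA + b • MB := by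
    ext i j
    fin_cases i <;> fin_cases j <;> rfl
  rw [det_eq_det_submatrix_mul_of_stationary hH (y := pencilCenter MA MB cA cB a b) fun i => ?_,
    hK']
  · simp only [add_mulVec, smul_mulVec, dotProduct_add, dotProduct_smul,
      homogenize_dotProduct_ellipseHomMat_mulVec, smul_eq_mul]
  · simpa only [add_mulVec, smul_mulVec, Pi.add_apply, Pi.smul_apply, Pi.zero_apply,
      ellipseHomMat_mulVec_homogenize_castSucc] using congrFun (pencilCenter_stationary hK) i

theorem det_pencil_pos_iff (hA : MA.IsSymm) (hB : MB.IsSymm) (hK : (a • MA + b • MB).PosDef) :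
    0 < (a • ellipseHomMat MA cA + b • ellipseHomMat MB cB).det ↔
      ∀ p, 0 < a * ellipseForm MA cA p + b * ellipseForm MB cB p := by
  rw [det_pencil_ellipseHomMat hA hB hK.det_pos.ne'.isUnit, mul_pos_iff_of_pos_left hK.det_pos]
  exact ⟨fun h p => h.trans_le (pencil_ellipseForm_pencilCenter_le hA hB hK p),
    fun h => h _⟩

end PencilDet

namespace Polynomial

theorem eval_det_X_smul_add {n : Type*} [Fintype n] [DecidableEq n] (A B : Matrix n n ℝ)
    (μ : ℝ) : (det ((X : ℝ[X]) • A.map C + B.map C)).eval μ = (μ • A + B).det := by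
  rw [← coe_evalRingHom, RingHom.map_det]
  congr 1
  ext i j
  simp only [RingHom.mapMatrix_apply, coe_evalRingHom, map_apply, Matrix.add_apply,
    Matrix.smul_apply, smul_eq_mul, eval_add, eval_mul, eval_C, eval_X]

variable {P : ℝ[X]}

theorem eval_eq_of_natDegree_le_three (hdeg : P.natDegree ≤ 3) (x : ℝ) :
    P.eval x = P.coeff 3 * x ^ 3 + P.coeff 2 * x ^ 2 + P.coeff 1 * x + P.coeff 0 := by
  rw [eval_eq_sum_range' (Nat.lt_succ_of_le hdeg)]
  simp only [Finset.sum_range_succ, Finset.sum_range_zero]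
  ring

theorem eval_pos_of_mem_Ioo_of_eval_eq_zero (hdeg : P.natDegree ≤ 3) (h3 : P.coeff 3 < 0)
    (h0 : P.coeff 0 < 0) {x y t : ℝ} (hx : 0 < x) (ht : t ∈ Set.Ioo x y)
    (hxr : P.eval x = 0) (hyr : P.eval y = 0) : 0 < P.eval t := by
  rw [eval_eq_of_natDegree_le_three hdeg] at hxr hyr ⊢
  set a := P.coeff 3
  set b := P.coeff 2
  set c := P.coeff 1
  set d := P.coeff 0
  set e := a * (x + y) + b
  have hc : c = -(a * (x ^ 2 + x * y + y ^ 2) + b * (x + y)) := by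
    refine mul_left_cancel₀ (sub_ne_zero.mpr (ht.1.trans ht.2).ne') ?_
    linear_combination hyr - hxr
  have hd : d = x * y * e := by linear_combination hxr - x * hc
  have he : e < 0 := neg_of_mul_neg_right (hd ▸ h0) (by nlinarith [ht.1, ht.2])
  have hfactor : a * t ^ 3 + b * t ^ 2 + c * t + d = (t - x) * (t - y) * (a * t + e) := by
    rw [hc, hd]; ring
  have hat : a * t < 0 := mul_neg_of_neg_of_pos h3 (hx.trans ht.1)
  rw [hfactor]
  exact mul_pos_of_neg_of_neg (mul_neg_of_pos_of_neg (by linarith [ht.1]) (by linarith [ht.2]))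
    (by linarith)

theorem exists_eval_pos_iff_exists_two_pos_roots (hdeg : P.natDegree ≤ 3) (h3 : P.coeff 3 < 0)
    (h0 : P.coeff 0 < 0) :
    (∃ μ > 0, 0 < P.eval μ) ↔
      ∃ μ₁ μ₂ : ℝ, 0 < μ₁ ∧ 0 < μ₂ ∧ μ₁ ≠ μ₂ ∧ P.eval μ₁ = 0 ∧ P.eval μ₂ = 0 := by
  constructor
  · rintro ⟨μ, hμ, hpos⟩
    have hP0 : P.eval 0 < 0 := by rwa [← coeff_zero_eq_eval_zero]
    obtain ⟨μ₁, hμ₁, hr₁⟩ := intermediate_value_Ioo hμ.le P.continuous.continuousOn ⟨hP0, hpos⟩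
    have hnat : P.natDegree = 3 := natDegree_eq_of_le_of_coeff_ne_zero hdeg h3.ne
    have hlim := P.tendsto_atBot_of_leadingCoeff_nonpos
      (natDegree_pos_iff_degree_pos.mp (by omega)) (by rw [leadingCoeff, hnat]; exact h3.le)
    obtain ⟨N, hN⟩ := Filter.eventually_atTop.mp (hlim.eventually (Filter.eventually_lt_atBot 0))
    obtain ⟨μ₂, hμ₂, hr₂⟩ := intermediate_value_Ioo' (le_max_right N μ)
      P.continuous.continuousOn ⟨hN _ (le_max_left N μ), hpos⟩
    exact ⟨μ₁, μ₂, hμ₁.1, hμ.trans hμ₂.1, (hμ₁.2.trans hμ₂.1).ne, hr₁, hr₂⟩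
  · rintro ⟨μ₁, μ₂, hμ₁, hμ₂, hne, hr₁, hr₂⟩
    rcases hne.lt_or_gt with h | h
    · exact ⟨(μ₁ + μ₂) / 2, by positivity, eval_pos_of_mem_Ioo_of_eval_eq_zero hdeg h3 h0 hμ₁
        ⟨by linarith, by linarith⟩ hr₁ hr₂⟩
    · exact ⟨(μ₁ + μ₂) / 2, by positivity, eval_pos_of_mem_Ioo_of_eval_eq_zero hdeg h3 h0 hμ₂
        ⟨by linarith, by linarith⟩ hr₂ hr₁⟩

end Polynomial

open Polynomial in
theorem exists_det_pencil_pos_iff_exists_two_pos_roots {MA MB : Matrix (Fin 2) (Fin 2) ℝ}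
    {cA cB : Fin 2 → ℝ} (hA : 0 < MA.det) (hB : 0 < MB.det) :
    (∃ μ > (0 : ℝ), 0 < (μ • ellipseHomMat MA cA + ellipseHomMat MB cB).det) ↔
      ∃ μ₁ μ₂ : ℝ, 0 < μ₁ ∧ 0 < μ₂ ∧ μ₁ ≠ μ₂ ∧
        (μ₁ • ellipseHomMat MA cA + ellipseHomMat MB cB).det = 0 ∧
        (μ₂ • ellipseHomMat MA cA + ellipseHomMat MB cB).det = 0 := by
  set A := ellipseHomMat MA cA
  set B := ellipseHomMat MB cB
  have h3 : (det ((X : ℝ[X]) • A.map C + B.map C)).coeff 3 < 0 := by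
    have hcard := coeff_det_X_add_C_card A B
    rw [Fintype.card_fin, det_ellipseHomMat] at hcard
    linarith
  have h0 : (det ((X : ℝ[X]) • A.map C + B.map C)).coeff 0 < 0 := by
    rw [coeff_det_X_add_C_zero, det_ellipseHomMat]
    linarith
  simpa only [eval_det_X_smul_add] using
    exists_eval_pos_iff_exists_two_pos_roots (natDegree_det_X_add_C_le A B) h3 h0

theorem ellipses_disjoint_iff_two_distinct_negative_roots_general
    (MA MB : Matrix (Fin 2) (Fin 2) ℝ) (cA cB : Fin 2 → ℝ)
    (hMA : MA.PosDef)
    (hMB : MB.PosDef) :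
    solidEllipse MA cA ∩ solidEllipse MB cB = ∅ ↔
      ∃ l1 l2 : ℝ, l1 < 0 ∧ l2 < 0 ∧ l1 ≠ l2 ∧
        (l1 • ellipseHomMat MA cA - ellipseHomMat MB cB).det = 0 ∧
        (l2 • ellipseHomMat MA cA - ellipseHomMat MB cB).det = 0 := by
  have hpencil : ∀ μ > (0 : ℝ), 0 < (μ • ellipseHomMat MA cA + ellipseHomMat MB cB).det ↔
      ∀ p, 0 < μ * ellipseForm MA cA p + ellipseForm MB cB p := fun μ hμ => by
    simpa only [one_smul, one_mul] using det_pencil_pos_iff (b := 1) (cA := cA) (cB := cB) hMA.isSymm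
      hMB.isSymm (posDef_pencil hMA hMB hμ.le zero_le_one (by linarith))
  have hneg : ∀ l : ℝ, (l • ellipseHomMat MA cA - ellipseHomMat MB cB).det =
      -((-l) • ellipseHomMat MA cA + ellipseHomMat MB cB).det := fun l => by
    rw [show l • ellipseHomMat MA cA - ellipseHomMat MB cB =
      -((-l) • ellipseHomMat MA cA + ellipseHomMat MB cB) by module, det_neg]
    norm_num
  rw [← Set.disjoint_iff_inter_eq_empty, solidEllipse_eq_setOf_ellipseForm,
    solidEllipse_eq_setOf_ellipseForm, disjoint_iff_exists_pencil_pos hMA hMB,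
    ← exists_congr fun μ => and_congr_right fun hμ => hpencil μ hμ,
    exists_det_pencil_pos_iff_exists_two_pos_roots hMA.det_pos hMB.det_pos]
  simp only [hneg, neg_eq_zero]
  constructor
  · rintro ⟨μ₁, μ₂, h₁, h₂, hne, hr₁, hr₂⟩
    exact ⟨-μ₁, -μ₂, by linarith, by linarith, neg_injective.ne hne, by simpa, by simpa⟩
  · rintro ⟨l₁, l₂, h₁, h₂, hne, hr₁, hr₂⟩
    exact ⟨-l₁, -l₂, by linarith, by linarith, neg_injective.ne hne, hr₁, hr₂⟩

/-- Two solid planar ellipses (with symmetric positive definite shape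
matrices) are disjoint if and only if the characteristic polynomial
`f(λ) = det(λ·A − B)` of their homogeneous matrices has two distinct negative real
roots. -/
theorem ellipses_disjoint_iff_two_distinct_negative_roots
    (MA MB : Matrix (Fin 2) (Fin 2) ℝ) (cA cB : Fin 2 → ℝ)
    (hMAsymm : MA.IsSymm) (hMA : MA.PosDef)
    (hMBsymm : MB.IsSymm) (hMB : MB.PosDef) :
    solidEllipse MA cA ∩ solidEllipse MB cB = ∅ ↔
      ∃ l1 l2 : ℝ, l1 < 0 ∧ l2 < 0 ∧ l1 ≠ l2 ∧
        (l1 • ellipseHomMat MA cA - ellipseHomMat MB cB).det = 0 ∧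
        (l2 • ellipseHomMat MA cA - ellipseHomMat MB cB).det = 0 :=
  ellipses_disjoint_iff_two_distinct_negative_roots_general MA MB cA cB hMA hMB
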